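/- arXiv:2508.21309 — 5 statements merged into one kernel-verified Lean document; each statement's English description precedes it below -/
import Mathlib

section
/- For a nondecreasing submodular set function q on subsets of a finite set with q(∅) = 0, and any sets S, T, one has q(T) ≤ q(S) + Σ_{j ∈ T \ S} (q(S ∪ {j}) − q(S)). -/
/-!
Add the elements of `T \ S` to `S` one at a time. For `j ∉ D` the sets `insert j S` and `S ∪ D`
meet exactly in `S`, so submodularity says that the gain of `j` over `S ∪ D` is at most its gain
over `S`; summing gives the bound for `q (S ∪ T)`, and monotonicity passes it down to `q T`.
-/

open Finset

section

variable {α β : Type*} [DecidableEq α] [AddCommGroup β] [PartialOrder β] [IsOrderedAddMonoid β]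

theorem insert_inter_union_eq_of_notMem {S D : Finset α} {j : α} (hj : j ∉ D) :
    insert j S ∩ (S ∪ D) = S := by
  ext x
  simp only [mem_inter, mem_insert, mem_union]
  grind

theorem union_le_add_sum_insert_sub_of_submodular {q : Finset α → β}
    (hsub : ∀ A B : Finset α, q (A ∪ B) + q (A ∩ B) ≤ q A + q B) (S D : Finset α) :
    q (S ∪ D) ≤ q S + ∑ j ∈ D, (q (insert j S) - q S) := by
  induction D using Finset.induction_on with
  | empty => simp
  | insert j D hj ih =>
    have hstep : q (S ∪ insert j D) + q S ≤ q (insert j S) + q (S ∪ D) := by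
      have h := hsub (insert j S) (S ∪ D)
      rwa [insert_inter_union_eq_of_notMem hj, insert_union, ← union_assoc, union_self,
        ← union_insert] at h
    have hgain : q (S ∪ insert j D) ≤ (q (insert j S) - q S) + q (S ∪ D) := by
      rw [sub_add_eq_add_sub, le_sub_iff_add_le]
      exact hstep
    calc q (S ∪ insert j D) ≤ (q (insert j S) - q S) + q (S ∪ D) := hgain
      _ ≤ (q (insert j S) - q S) + (q S + ∑ i ∈ D, (q (insert i S) - q S)) := by gcongr
      _ = q S + ∑ i ∈ insert j D, (q (insert i S) - q S) := by
        rw [sum_insert hj]; abel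

end

theorem submodular_marginal_bound_general {α : Type*} [DecidableEq α]
    (q : Finset α → ℝ)
    (hsub : ∀ A B : Finset α, q (A ∪ B) + q (A ∩ B) ≤ q A + q B)
    (hmono : ∀ A B : Finset α, A ⊆ B → q A ≤ q B) :
    ∀ S T : Finset α, q T ≤ q S + ∑ j ∈ T \ S, (q (insert j S) - q S) := by
  intro S T
  calc q T ≤ q (S ∪ (T \ S)) :=
        hmono _ _ (by rw [union_sdiff_self_eq_union]; exact subset_union_right)
    _ ≤ q S + ∑ j ∈ T \ S, (q (insert j S) - q S) :=
      union_le_add_sum_insert_sub_of_submodular hsub S (T \ S)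

/-- Nemhauser–Wolsey–Fisher, Proposition 2.1: for a nondecreasing submodular set
function `q` with `q ∅ = 0` on subsets of a finite type, and any sets `S`, `T`,
`q T ≤ q S + ∑_{j ∈ T \ S} (q (S ∪ {j}) − q S)`. -/
theorem submodular_marginal_bound {α : Type*} [Fintype α] [DecidableEq α]
    (q : Finset α → ℝ)
    (hsub : ∀ A B : Finset α, q (A ∪ B) + q (A ∩ B) ≤ q A + q B)
    (hmono : ∀ A B : Finset α, A ⊆ B → q A ≤ q B)
    (hempty : q ∅ = 0) :
    ∀ S T : Finset α, q T ≤ q S + ∑ j ∈ T \ S, (q (insert j S) - q S) :=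
  submodular_marginal_bound_general q hsub hmono
end

section
/- The greedy algorithm for maximizing a nondecreasing submodular function q with q(∅) = 0 subject to a matroid constraint returns a set S with q(S) ≥ (1/2) · q(OPT), where OPT is an optimal independent set. -/
/-!
Write `D = OPT \ S M` and `Δ(x | A) = q (insert x A) - q A`. By submodularity and monotonicity,
`q OPT ≤ q (S M) + ∑_{x ∈ D} Δ(x | S M)`.
Every `x ∈ D` can be charged to a step `t` at which `x` was still addable, with distinct
elements charged to distinct steps: by the exchange axiom at most `t` elements of `OPT` are
blocked by `S t`, which is Hall's condition for the down-sets of steps at which each `x` is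
addable. Diminishing returns and the greedy choice bound `Δ(x | S M)` by the gain of the charged
step, and the gains of all steps sum to `q (S M)`.
-/

open Finset

section Submodular

variable {α : Type*} [DecidableEq α] {q : Finset α → ℝ}

theorem marginal_le_marginal_of_subset
    (hsub : ∀ A B : Finset α, q (A ∪ B) + q (A ∩ B) ≤ q A + q B)
    {B C : Finset α} (hCB : C ⊆ B) {x : α} (hx : x ∉ B) :
    q (insert x B) - q B ≤ q (insert x C) - q C := by
  have h := hsub (insert x C) B
  rw [insert_union, union_eq_right.mpr hCB, insert_inter_of_notMem hx,
    inter_eq_left.mpr hCB] at h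
  linarith

theorem le_add_sum_marginal
    (hsub : ∀ A B : Finset α, q (A ∪ B) + q (A ∩ B) ≤ q A + q B)
    (B : Finset α) {D : Finset α} (hDB : Disjoint D B) :
    q (B ∪ D) ≤ q B + ∑ x ∈ D, (q (insert x B) - q B) := by
  induction D using Finset.induction_on with
  | empty => simp
  | insert x D hxD ih =>
    rw [disjoint_insert_left] at hDB
    have hx : x ∉ B ∪ D := by simp [hDB.1, hxD]
    have h := marginal_le_marginal_of_subset hsub subset_union_left hx
    rw [union_insert, sum_insert hxD]
    linarith [ih hDB.2]

end Submodular

theorem card_le_of_forall_not_indep_insert {α : Type*} [DecidableEq α]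
    {Indep : Finset α → Prop}
    (hexch : ∀ A B : Finset α, Indep A → Indep B → A.card < B.card →
      ∃ x ∈ B \ A, Indep (insert x A))
    {B U : Finset α} (hB : Indep B) (hU : Indep U)
    (hblocked : ∀ x ∈ U, ¬ Indep (insert x B)) :
    #U ≤ #B := by
  by_contra! hlt
  obtain ⟨x, hx, hxB⟩ := hexch B U hB hU hlt
  exact hblocked x (mem_sdiff.mp hx).1 hxB

theorem exists_injective_of_forall_card_le {α : Type*} {D : Finset α} {p : α → ℕ → Prop}
    {M : ℕ} (hanti : ∀ x ∈ D, ∀ s t, s ≤ t → t < M → p x t → p x s)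
    (hend : ∀ x ∈ D, ¬ p x M)
    (hcard : ∀ k ≤ M, ∀ U ⊆ D, (∀ x ∈ U, ¬ p x k) → #U ≤ k) :
    ∃ φ : D → ℕ, Function.Injective φ ∧ (∀ x, φ x < M) ∧ ∀ x : D, p x (φ x) := by
  classical
  let T : D → Finset ℕ := fun x => {t ∈ range M | p x t}
  suffices hall : ∀ s : Finset D, #s ≤ #(s.biUnion T) by
    obtain ⟨φ, hφ, hφT⟩ := (all_card_le_biUnion_card_iff_exists_injective T).mp hall
    simp only [T, mem_filter, mem_range] at hφT
    exact ⟨φ, hφ, fun x => (hφT x).1, fun x => (hφT x).2⟩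
  intro s
  have hUM : s.biUnion T ⊆ range M := biUnion_subset.mpr fun x _ => filter_subset _ _
  set k := #(s.biUnion T)
  have hkM : k ≤ M := by simpa using card_le_card hUM
  -- `p x` is downward closed, so `p x k` would put all of `range (k + 1)` in the union
  have hblocked : ∀ x ∈ s, ¬ p x k := by
    intro x hx hp
    rcases hkM.lt_or_eq with hk | hk
    · have hrange : range (k + 1) ⊆ s.biUnion T := fun t ht =>
        mem_biUnion.mpr ⟨x, hx, mem_filter.mpr
          ⟨mem_range.mpr (by simp at ht; omega),
            hanti x x.2 t k (by simpa [Nat.lt_succ_iff] using ht) hk hp⟩⟩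
      exact (card_le_card hrange).not_gt (by simp [k])
    · exact hend x x.2 (hk ▸ hp)
  rw [← card_map (Function.Embedding.subtype _)]
  exact hcard k hkM (s.map (Function.Embedding.subtype _)) (fun x hx => by
    obtain ⟨y, -, rfl⟩ := mem_map.mp hx
    exact y.2) (by simpa using hblocked)

theorem monotoneOn_Iic_of_le_succ {β : Type*} [Preorder β] {f : ℕ → β} {M : ℕ}
    (h : ∀ t < M, f t ≤ f (t + 1)) : MonotoneOn f (Set.Iic M) := by
  intro s _ t ht hst
  induction t, hst using Nat.le_induction with
  | base => exact le_rfl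
  | succ t hst ih => exact (ih (by simp at ht ⊢; omega)).trans (h t (by simp at ht; omega))

theorem card_le_of_eq_insert {α : Type*} [DecidableEq α] {S : ℕ → Finset α} {e : ℕ → α}
    {M : ℕ} (hS0 : S 0 = ∅) (hstep : ∀ t < M, S (t + 1) = insert (e t) (S t)) :
    ∀ t ≤ M, #(S t) ≤ t
  | 0, _ => by simp [hS0]
  | t + 1, ht => by
    rw [hstep t ht]
    exact (card_insert_le _ _).trans (by simpa using card_le_of_eq_insert hS0 hstep t (by omega))

theorem sum_comp_le_sum_of_injective {ι β : Type*} [Fintype ι] {φ : ι → β}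
    (hφ : Function.Injective φ) {s : Finset β} (hφs : ∀ i, φ i ∈ s) {f : β → ℝ}
    (hf : ∀ b ∈ s, 0 ≤ f b) : ∑ i, f (φ i) ≤ ∑ b ∈ s, f b := by
  classical
  rw [← sum_image fun i _ j _ h => hφ h]
  exact sum_le_sum_of_subset_of_nonneg (by simp [subset_iff, hφs]) fun b hb _ => hf b hb

theorem greedy_matroid_half_approx_general {α : Type*} [DecidableEq α]
    (Indep : Finset α → Prop)
    (hhered : ∀ A B : Finset α, A ⊆ B → Indep B → Indep A)
    (hexch : ∀ A B : Finset α, Indep A → Indep B → A.card < B.card →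
      ∃ x ∈ B \ A, Indep (insert x A))
    (q : Finset α → ℝ)
    (hmono : ∀ A B : Finset α, A ⊆ B → q A ≤ q B)
    (hsub : ∀ A B : Finset α, q (A ∪ B) + q (A ∩ B) ≤ q A + q B)
    (hq0 : q ∅ = 0)
    (M : ℕ) (S : ℕ → Finset α) (e : ℕ → α)
    (hS0 : S 0 = ∅)
    (hstep : ∀ t < M, S (t + 1) = insert (e t) (S t))
    (hindep : ∀ t ≤ M, Indep (S t))
    (hgreedy : ∀ t < M, ∀ x ∉ S t, Indep (insert x (S t)) →
      q (insert x (S t)) - q (S t) ≤ q (S (t + 1)) - q (S t))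
    (hmaximal : ∀ x ∉ S M, ¬ Indep (insert x (S M))) :
    ∀ OPT : Finset α, Indep OPT → (1 / 2 : ℝ) * q OPT ≤ q (S M) := by
  intro OPT hOPT
  have hchain : MonotoneOn S (Set.Iic M) :=
    monotoneOn_Iic_of_le_succ fun t ht => (hstep t ht).symm ▸ subset_insert _ _
  have hchain' {s t : ℕ} (hst : s ≤ t) (htM : t ≤ M) : S s ⊆ S t :=
    hchain (Set.mem_Iic.mpr (hst.trans htM)) (Set.mem_Iic.mpr htM) hst
  set D := OPT \ S M
  obtain ⟨φ, hφ, hφM, hφfeasible⟩ : ∃ φ : D → ℕ, Function.Injective φ ∧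
      (∀ x, φ x < M) ∧ ∀ x : D, Indep (insert (x : α) (S (φ x))) :=
    exists_injective_of_forall_card_le
      (fun x _ s t hst htM => hhered _ _ (insert_subset_insert x (hchain' hst htM.le)))
      (fun x hx => hmaximal x (mem_sdiff.mp hx).2)
      (fun k hk U hUD hU => (card_le_of_forall_not_indep_insert hexch (hindep k hk)
        (hhered U OPT (hUD.trans sdiff_subset) hOPT) hU).trans
        (card_le_of_eq_insert hS0 hstep k hk))
  have hgain (x : D) :
      q (insert (x : α) (S M)) - q (S M) ≤ q (S (φ x + 1)) - q (S (φ x)) := by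
    have hxS : (x : α) ∉ S M := (mem_sdiff.mp x.2).2
    have hsubset := hchain' (hφM x).le le_rfl
    exact (marginal_le_marginal_of_subset hsub hsubset hxS).trans
      (hgreedy _ (hφM x) x (fun h => hxS (hsubset h)) (hφfeasible x))
  have hcharge : ∑ x : D, (q (S (φ x + 1)) - q (S (φ x))) ≤ q (S M) := calc
    _ ≤ ∑ t ∈ range M, (q (S (t + 1)) - q (S t)) :=
      sum_comp_le_sum_of_injective hφ (fun x => mem_range.mpr (hφM x)) fun t ht =>
        sub_nonneg.mpr (hmono _ _ (hchain' t.le_succ (mem_range.mp ht)))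
    _ = q (S M) := by rw [sum_range_sub (fun t => q (S t)), hS0, hq0, sub_zero]
  have hOPT : q OPT ≤ q (S M) + ∑ x : D, (q (insert (x : α) (S M)) - q (S M)) := by
    rw [sum_coe_sort D fun x => q (insert x (S M)) - q (S M)]
    exact (hmono _ _ (by simp [D])).trans (le_add_sum_marginal hsub (S M) sdiff_disjoint)
  linarith [sum_le_sum fun x (_ : x ∈ univ) => hgain x]

/-- Fisher–Nemhauser–Wolsey: the greedy algorithm for maximizing a nondecreasing
submodular function `q` with `q ∅ = 0` subject to a matroid constraint (given by its
family `Indep` of independent sets) returns a set `S M` with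
`q (S M) ≥ (1/2) · q OPT` for every independent set `OPT`.  The greedy run is encoded
by the sequence `S 0 = ∅`, `S (t+1) = S t ∪ {e t}`, where each step adds a feasible
element of maximum marginal gain and the final set is maximal independent. -/
theorem greedy_matroid_half_approx {α : Type*} [DecidableEq α]
    (Indep : Finset α → Prop)
    (hempty : Indep ∅)
    (hhered : ∀ A B : Finset α, A ⊆ B → Indep B → Indep A)
    (hexch : ∀ A B : Finset α, Indep A → Indep B → A.card < B.card →
      ∃ x ∈ B \ A, Indep (insert x A))
    (q : Finset α → ℝ)
    (hmono : ∀ A B : Finset α, A ⊆ B → q A ≤ q B)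
    (hsub : ∀ A B : Finset α, q (A ∪ B) + q (A ∩ B) ≤ q A + q B)
    (hq0 : q ∅ = 0)
    (M : ℕ) (S : ℕ → Finset α) (e : ℕ → α)
    (hS0 : S 0 = ∅)
    (hstep : ∀ t < M, S (t + 1) = insert (e t) (S t))
    (hnew : ∀ t < M, e t ∉ S t)
    (hindep : ∀ t ≤ M, Indep (S t))
    (hgreedy : ∀ t < M, ∀ x ∉ S t, Indep (insert x (S t)) →
      q (insert x (S t)) - q (S t) ≤ q (S (t + 1)) - q (S t))
    (hmaximal : ∀ x ∉ S M, ¬ Indep (insert x (S M))) :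
    ∀ OPT : Finset α, Indep OPT → (1 / 2 : ℝ) * q OPT ≤ q (S M) :=
  greedy_matroid_half_approx_general Indep hhered hexch q hmono hsub hq0 M S e hS0 hstep hindep
    hgreedy hmaximal
end

section
/- In a matroid, if each greedy step t selects an element of maximum marginal gain ρ_{t−1}, and s_{t−1} denotes the number of elements of the optimal base encountered between steps t−1 and t, then Σ_t ρ_{t−1} s_{t−1} ≤ Σ_t ρ_{t−1} whenever Σ_{τ ≤ t} s_{τ−1} ≤ t for all t and the sequence ρ_t is nonincreasing and nonnegative. -/
open Finset

/-! Summation by parts turns `∑ ρ t * a t` into `ρ (n-1) * A n - ∑ (ρ (t+1) - ρ t) * A (t+1)` with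
`A` the partial sums of `a`. Since `ρ (n-1) ≥ 0` and `ρ (t+1) - ρ t ≤ 0`, this expression is monotone
in the partial sums, so it suffices to compare `∑_{τ<t} s τ` with the partial sums `t` of `1`. -/

theorem Finset.sum_mul_le_sum_mul_of_partialSums_le {R : Type*} [Ring R] [PartialOrder R]
    [IsOrderedRing R] {n : ℕ} {ρ a b : ℕ → R} (hnonneg : ∀ t < n, 0 ≤ ρ t)
    (hanti : ∀ t, t + 1 < n → ρ (t + 1) ≤ ρ t)
    (hpartial : ∀ t ≤ n, ∑ τ ∈ range t, a τ ≤ ∑ τ ∈ range t, b τ) :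
    ∑ t ∈ range n, ρ t * a t ≤ ∑ t ∈ range n, ρ t * b t := by
  rcases n with _ | n
  · simp
  simp only [← smul_eq_mul]
  rw [sum_range_by_parts ρ a, sum_range_by_parts ρ b, add_tsub_cancel_right]
  refine sub_le_sub (smul_le_smul_of_nonneg_left (hpartial _ le_rfl) (hnonneg n n.lt_succ_self))
    (sum_le_sum fun t ht => ?_)
  have ht : t + 1 < n + 1 := by simpa using ht
  exact smul_le_smul_of_nonpos_left (hpartial _ ht.le) (sub_nonpos.mpr (hanti t ht))

/-- Fisher–Nemhauser–Wolsey, Proposition 2.2 (Abel-summation style inequality):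
given nonnegative nonincreasing reals `ρ 0 ≥ ρ 1 ≥ ⋯ ≥ ρ (M-1) ≥ 0` and nonnegative
integers `s 0, …, s (M-1)` whose partial sums satisfy `∑_{τ < t} s τ ≤ t` for all
`1 ≤ t ≤ M`, one has `∑_{t < M} ρ t * s t ≤ ∑_{t < M} ρ t`. -/
theorem abel_weighted_sum_le {M : ℕ} (ρ : ℕ → ℝ) (s : ℕ → ℕ)
    (hnonneg : ∀ t < M, 0 ≤ ρ t)
    (hanti : ∀ t, t + 1 < M → ρ (t + 1) ≤ ρ t)
    (hpartial : ∀ t, 1 ≤ t → t ≤ M → (∑ τ ∈ Finset.range t, s τ) ≤ t) :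
    ∑ t ∈ Finset.range M, ρ t * (s t : ℝ) ≤ ∑ t ∈ Finset.range M, ρ t := by
  have hpartial_ones : ∀ t ≤ M, ∑ τ ∈ range t, (s τ : ℝ) ≤ ∑ _τ ∈ range t, (1 : ℝ) := by
    rintro (_ | t) ht
    · simp
    simpa using (Nat.cast_le (α := ℝ)).mpr (hpartial (t + 1) t.succ_pos ht)
  simpa using sum_mul_le_sum_mul_of_partialSums_le hnonneg hanti hpartial_ones
end

section
/- For a nondecreasing submodular function q with q(∅) = 0, the marginal gains of the greedy algorithm are nonincreasing: if ρ_t denotes the gain of the element added at step t+1, then ρ_0 ≥ ρ_1 ≥ ⋯ ≥ ρ_{M−1} ≥ 0. -/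
/-!
Submodularity is equivalent to diminishing returns: the gain of adding `x` to `B` is at most
the gain of adding it to any `A ⊆ B`. The element `e (t+1)` chosen at step `t+1` was also an
admissible choice at step `t`, since `insert (e (t+1)) (S t) ⊆ S (t+2)` is independent, so its
gain on `S (t+1)` is at most its gain on `S t`, which the greedy choice `e t` dominates.
-/

open Finset

section DiminishingReturns

variable {α β : Type*} [DecidableEq α] [AddCommGroup β] [PartialOrder β] [IsOrderedAddMonoid β]

theorem sub_le_sub_of_submodular {q : Finset α → β}
    (hsub : ∀ A B : Finset α, q (A ∪ B) + q (A ∩ B) ≤ q A + q B)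
    {A B : Finset α} {x : α} (hAB : A ⊆ B) (hx : x ∉ B) :
    q (insert x B) - q B ≤ q (insert x A) - q A := by
  have h := hsub (insert x A) B
  rw [insert_union, union_eq_right.2 hAB, insert_inter_of_notMem hx,
    inter_eq_left.2 hAB] at h
  exact sub_le_sub_iff.2 h

end DiminishingReturns

theorem greedy_gains_nonincreasing_general {α : Type*} [DecidableEq α]
    (Indep : Finset α → Prop)
    (hhered : ∀ A B : Finset α, A ⊆ B → Indep B → Indep A)
    (q : Finset α → ℝ)
    (hmono : ∀ A B : Finset α, A ⊆ B → q A ≤ q B)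
    (hsub : ∀ A B : Finset α, q (A ∪ B) + q (A ∩ B) ≤ q A + q B)
    (M : ℕ) (S : ℕ → Finset α) (e : ℕ → α)
    (hstep : ∀ t < M, S (t + 1) = insert (e t) (S t))
    (hnew : ∀ t < M, e t ∉ S t)
    (hindep : ∀ t ≤ M, Indep (S t))
    (hgreedy : ∀ t < M, ∀ x ∉ S t, Indep (insert x (S t)) →
      q (insert x (S t)) - q (S t) ≤ q (S (t + 1)) - q (S t)) :
    (∀ t < M, 0 ≤ q (S (t + 1)) - q (S t)) ∧
    (∀ t, t + 1 < M →
      q (S (t + 2)) - q (S (t + 1)) ≤ q (S (t + 1)) - q (S t)) := by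
  have hgrow : ∀ t < M, S t ⊆ S (t + 1) := fun t ht => hstep t ht ▸ subset_insert _ _
  refine ⟨fun t ht => sub_nonneg.2 (hmono _ _ (hgrow t ht)), fun t ht => ?_⟩
  have ht' : t < M := by omega
  have hfresh : e (t + 1) ∉ S t := fun h => hnew (t + 1) ht (hgrow t ht' h)
  have hadmissible : Indep (insert (e (t + 1)) (S t)) :=
    hhered _ _ (hstep (t + 1) ht ▸ insert_subset_insert _ (hgrow t ht')) (hindep (t + 2) ht)
  calc q (S (t + 2)) - q (S (t + 1))
      = q (insert (e (t + 1)) (S (t + 1))) - q (S (t + 1)) := by rw [hstep (t + 1) ht]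
    _ ≤ q (insert (e (t + 1)) (S t)) - q (S t) :=
        sub_le_sub_of_submodular hsub (hgrow t ht') (hnew (t + 1) ht)
    _ ≤ q (S (t + 1)) - q (S t) := hgreedy t ht' _ hfresh hadmissible

/-- For greedy maximization of a nondecreasing submodular function `q` with `q ∅ = 0`
over a matroid, the marginal gains `ρ t = q (S (t+1)) − q (S t)` of the greedy
algorithm are nonnegative and nonincreasing: `ρ 0 ≥ ρ 1 ≥ ⋯ ≥ ρ (M−1) ≥ 0`. -/
theorem greedy_gains_nonincreasing {α : Type*} [DecidableEq α]
    (Indep : Finset α → Prop)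
    (hempty : Indep ∅)
    (hhered : ∀ A B : Finset α, A ⊆ B → Indep B → Indep A)
    (hexch : ∀ A B : Finset α, Indep A → Indep B → A.card < B.card →
      ∃ x ∈ B \ A, Indep (insert x A))
    (q : Finset α → ℝ)
    (hmono : ∀ A B : Finset α, A ⊆ B → q A ≤ q B)
    (hsub : ∀ A B : Finset α, q (A ∪ B) + q (A ∩ B) ≤ q A + q B)
    (hq0 : q ∅ = 0)
    (M : ℕ) (S : ℕ → Finset α) (e : ℕ → α)
    (hS0 : S 0 = ∅)
    (hstep : ∀ t < M, S (t + 1) = insert (e t) (S t))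
    (hnew : ∀ t < M, e t ∉ S t)
    (hindep : ∀ t ≤ M, Indep (S t))
    (hgreedy : ∀ t < M, ∀ x ∉ S t, Indep (insert x (S t)) →
      q (insert x (S t)) - q (S t) ≤ q (S (t + 1)) - q (S t)) :
    (∀ t < M, 0 ≤ q (S (t + 1)) - q (S t)) ∧
    (∀ t, t + 1 < M →
      q (S (t + 2)) - q (S (t + 1)) ≤ q (S (t + 1)) - q (S t)) :=
  greedy_gains_nonincreasing_general Indep hhered q hmono hsub M S e hstep hnew hindep hgreedy
end

section
/- The greedy algorithm for maximizing an arbitrary (not necessarily submodular) nonnegative tracking quality function over the heterogeneous robot-target assignment problem, which at each round selects the single robot or robot-pair and target with maximum quality and removes them, achieves total value at least 1/3 of the optimal assignment value. -/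
open Finset

/-- The sufficient-sensing robots used by an assignable unit
(a sufficient robot or a pair of limited robots). -/
def robotsS {Rs Rl : Type*} [DecidableEq Rs] : Rs ⊕ (Rl × Rl) → Finset Rs
  | Sum.inl r => {r}
  | Sum.inr _ => ∅

/-- The limited-sensing robots used by an assignable unit. -/
def robotsL {Rs Rl : Type*} [DecidableEq Rl] : Rs ⊕ (Rl × Rl) → Finset Rl
  | Sum.inl _ => ∅
  | Sum.inr (a, b) => {a, b}

/-- A (unit, target) assignment is valid if a pair-unit consists of two distinct
limited robots. -/
def ValidAsg {Rs Rl T : Type*} (p : (Rs ⊕ (Rl × Rl)) × T) : Prop :=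
  ∀ a b, p.1 = Sum.inr (a, b) → a ≠ b

/-- Two assignments conflict if they share a target or share a robot. -/
def ConflictAsg {Rs Rl T : Type*} [DecidableEq Rs] [DecidableEq Rl]
    (p q : (Rs ⊕ (Rl × Rl)) × T) : Prop :=
  p.2 = q.2 ∨ ¬ Disjoint (robotsS p.1) (robotsS q.1) ∨
    ¬ Disjoint (robotsL p.1) (robotsL q.1)

/-! Every greedy pick `g s` conflicts with at most three members of a conflict-free assignment
`A`: one through its target and one through each of its at most two robots. Charge each
`p ∈ A` to the first greedy pick it conflicts with; `p` was still available at that round, so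
`val p ≤ val (g s)`, and each `g s` is charged at most three times. -/

theorem Finset.disjoint_disjSum_disjSum {α β : Type*} {s₁ s₂ : Finset α}
    {t₁ t₂ : Finset β} :
    Disjoint (s₁.disjSum t₁) (s₂.disjSum t₂) ↔ Disjoint s₁ s₂ ∧ Disjoint t₁ t₂ := by
  simp only [disjoint_left, Sum.forall, inl_mem_disjSum, inr_mem_disjSum]

theorem Finset.card_filter_not_disjoint_le {α β : Type*} [DecidableEq β] {A : Finset α}
    {S : α → Finset β} (hA : (A : Set α).PairwiseDisjoint S) (R : Finset β) :
    #{a ∈ A | ¬Disjoint (S a) R} ≤ #R := by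
  set B := {a ∈ A | ¬Disjoint (S a) R}
  have hB : (B : Set α).PairwiseDisjoint fun a => S a ∩ R :=
    (hA.subset (coe_subset.mpr (filter_subset _ A))).mono fun a => inter_subset_left
  calc #B ≤ #(B.biUnion fun a => S a ∩ R) :=
        card_le_card_biUnion hB fun a ha =>
          not_disjoint_iff_nonempty_inter.mp (mem_filter.mp ha).2
    _ ≤ #R := card_le_card (biUnion_subset.mpr fun a _ => inter_subset_right)

theorem Finset.sum_le_mul_sum_of_card_filter_le {α ι : Type*} [Fintype ι] (A : Finset α)
    (P : α → ι → Prop) [∀ a i, Decidable (P a i)] {v : α → ℝ} {w : ι → ℝ} {c : ℕ}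
    (hw : ∀ i, 0 ≤ w i) (hv : ∀ a ∈ A, ∃ i, P a i ∧ v a ≤ w i)
    (hc : ∀ i, #{a ∈ A | P a i} ≤ c) :
    ∑ a ∈ A, v a ≤ c * ∑ i, w i := by
  calc ∑ a ∈ A, v a ≤ ∑ a ∈ A, ∑ i, if P a i then w i else 0 := by
        refine sum_le_sum fun a ha => ?_
        obtain ⟨i, hi, hle⟩ := hv a ha
        calc v a ≤ if P a i then w i else 0 := by rwa [if_pos hi]
          _ ≤ _ := single_le_sum (fun j _ => ite_nonneg (hw j) le_rfl) (mem_univ i)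
    _ = ∑ i, (#{a ∈ A | P a i} : ℝ) * w i := by
        rw [sum_comm]
        refine sum_congr rfl fun i _ => ?_
        rw [← sum_filter, sum_const, nsmul_eq_mul]
    _ ≤ ∑ i, (c : ℝ) * w i :=
        sum_le_sum fun i _ => mul_le_mul_of_nonneg_right (by exact_mod_cast hc i) (hw i)
    _ = c * ∑ i, w i := (mul_sum _ _ _).symm

section Resources

variable {Rs Rl T : Type*} [DecidableEq Rs] [DecidableEq Rl]

def resources (p : (Rs ⊕ (Rl × Rl)) × T) : Finset (T ⊕ Rs ⊕ Rl) :=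
  ({p.2} : Finset T).disjSum ((robotsS p.1).disjSum (robotsL p.1))

theorem conflictAsg_iff_not_disjoint_resources (p q : (Rs ⊕ (Rl × Rl)) × T) :
    ConflictAsg p q ↔ ¬Disjoint (resources p) (resources q) := by
  simp only [ConflictAsg, resources, disjoint_disjSum_disjSum, disjoint_singleton]
  tauto

theorem card_resources_le_three (p : (Rs ⊕ (Rl × Rl)) × T) : #(resources p) ≤ 3 := by
  obtain ⟨r | ⟨a, b⟩, j⟩ := p <;>
    simp only [resources, card_disjSum, card_singleton, robotsS, robotsL, card_empty]
  · decide
  · have := card_le_two (a := a) (b := b)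
    omega

theorem card_filter_conflictAsg_le_three {A : Finset ((Rs ⊕ (Rl × Rl)) × T)}
    (hA : ∀ p ∈ A, ∀ q ∈ A, p ≠ q → ¬ConflictAsg p q) (q : (Rs ⊕ (Rl × Rl)) × T)
    [DecidablePred (ConflictAsg · q)] :
    #{p ∈ A | ConflictAsg p q} ≤ 3 := by
  classical
  have hdisj : (A : Set _).PairwiseDisjoint resources := fun p hp p' hp' hne =>
    not_not.mp fun h => hA p hp p' hp' hne ((conflictAsg_iff_not_disjoint_resources p p').mpr h)
  calc #{p ∈ A | ConflictAsg p q} = #{p ∈ A | ¬Disjoint (resources p) (resources q)} :=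
        congr_arg card (filter_congr fun p _ => conflictAsg_iff_not_disjoint_resources p q)
    _ ≤ #(resources q) := card_filter_not_disjoint_le hdisj _
    _ ≤ 3 := card_resources_le_three q

end Resources

theorem greedy_heterogeneous_one_third_general {Rs Rl T : Type*}
    [DecidableEq Rs] [DecidableEq Rl]
    (val : (Rs ⊕ (Rl × Rl)) × T → ℝ)
    (hval : ∀ p, 0 ≤ val p)
    (K : ℕ) (g : Fin K → (Rs ⊕ (Rl × Rl)) × T)
    (hgreedy : ∀ t : Fin K, ∀ p, ValidAsg p →
      (∀ s : Fin K, s < t → ¬ ConflictAsg p (g s)) → val p ≤ val (g t))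
    (hterm : ∀ p, ValidAsg p → ∃ s : Fin K, ConflictAsg p (g s)) :
    ∀ A : Finset ((Rs ⊕ (Rl × Rl)) × T),
      (∀ p ∈ A, ValidAsg p) →
      (∀ p ∈ A, ∀ q ∈ A, p ≠ q → ¬ ConflictAsg p q) →
      ∑ p ∈ A, val p ≤ 3 * ∑ t : Fin K, val (g t) := by
  classical
  intro A hAvalid hAdisj
  have hcharge : ∀ p ∈ A, ∃ s, ConflictAsg p (g s) ∧ val p ≤ val (g s) := by
    intro p hp
    obtain ⟨s, hs, hfirst⟩ :=
      wellFounded_lt.has_min {s | ConflictAsg p (g s)} (hterm p (hAvalid p hp))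
    exact ⟨s, hs, hgreedy s p (hAvalid p hp) fun t hts ht => hfirst t ht hts⟩
  exact_mod_cast sum_le_mul_sum_of_card_filter_le A (fun p s => ConflictAsg p (g s))
    (fun s => hval (g s)) hcharge fun s => card_filter_conflictAsg_le_three hAdisj (g s)

/-- The greedy algorithm for the heterogeneous robot-target assignment problem with
an arbitrary nonnegative quality function: at each round it selects a feasible
(unit, target) pair of maximum value and removes the involved robots and target;
it achieves at least 1/3 of the value of any feasible assignment. -/
theorem greedy_heterogeneous_one_third {Rs Rl T : Type*}
    [DecidableEq Rs] [DecidableEq Rl] [DecidableEq T]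
    (val : (Rs ⊕ (Rl × Rl)) × T → ℝ)
    (hval : ∀ p, 0 ≤ val p)
    (hsym : ∀ (a b : Rl) (j : T), val (Sum.inr (a, b), j) = val (Sum.inr (b, a), j))
    (K : ℕ) (g : Fin K → (Rs ⊕ (Rl × Rl)) × T)
    (hgvalid : ∀ t, ValidAsg (g t))
    (hgdisj : ∀ s t : Fin K, s ≠ t → ¬ ConflictAsg (g s) (g t))
    (hgreedy : ∀ t : Fin K, ∀ p, ValidAsg p →
      (∀ s : Fin K, s < t → ¬ ConflictAsg p (g s)) → val p ≤ val (g t))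
    (hterm : ∀ p, ValidAsg p → ∃ s : Fin K, ConflictAsg p (g s)) :
    ∀ A : Finset ((Rs ⊕ (Rl × Rl)) × T),
      (∀ p ∈ A, ValidAsg p) →
      (∀ p ∈ A, ∀ q ∈ A, p ≠ q → ¬ ConflictAsg p q) →
      ∑ p ∈ A, val p ≤ 3 * ∑ t : Fin K, val (g t) :=
  greedy_heterogeneous_one_third_general val hval K g hgreedy hterm
end
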